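/- Let X and U be independent real random variables with E|X|^{2p} < ∞ and E|U|^p < ∞, let W = X + U, and suppose the moment matrix M = (E(X^{j+k}))_{0≤j,k≤p} is positive definite. Then for any real numbers c_0, …, c_p there exists a unique polynomial γ₁ of degree at most p such that E{γ₁(X) W^k} = c_k for 0 ≤ k ≤ p. In particular, for any bounded measurable function γ there is a unique polynomial γ₁ of degree at most p with E{γ(X) W^k} = E{γ₁(X) W^k} for 0 ≤ k ≤ p. -/

import Mathlib

/-!
Expanding `W ^ k = (X + U) ^ k` binomially and factoring the expectations by independence gives
`E(X ^ j W ^ k) = ∑ᵢ E(X ^ (j + i)) · C(k, i) E(U ^ (k - i))`, i.e. the matrix of the linear system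
for `η` is `M * T` with `T` upper triangular with unit diagonal (`E(U ^ 0) = 1`). Hence it is
invertible as soon as `M` is, and the system has exactly one solution for every right-hand side;
the second claim is the first with `c k = E(γ(X) W ^ k)`.
-/

open MeasureTheory ProbabilityTheory Finset Matrix

namespace Matrix

variable {R : Type*}

/-- Entry `(i, k)` is `C(k, i) a (k - i)`; the truncated `k - i` is harmless, since the binomial
coefficient vanishes when `k < i`. -/
def binomialConv [Semiring R] (n : ℕ) (a : ℕ → R) : Matrix (Fin n) (Fin n) R :=
  of fun i k => ((k : ℕ).choose i : R) * a (k - i)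

theorem binomialConv_isUpperTriangular [Semiring R] (n : ℕ) (a : ℕ → R) :
    (binomialConv n a).IsUpperTriangular := fun k i hik => by
  simp [binomialConv, Nat.choose_eq_zero_of_lt (show (i : ℕ) < k from hik)]

theorem det_binomialConv [CommRing R] {n : ℕ} {a : ℕ → R} (ha : a 0 = 1) :
    (binomialConv n a).det = 1 := by
  rw [det_of_isUpperTriangular (binomialConv_isUpperTriangular n a)]
  exact prod_eq_one fun i _ => by simp [binomialConv, ha]

theorem existsUnique_vecMul_eq {n K : Type*} [Fintype n] [DecidableEq n] [Field K]
    {A : Matrix n n K} (hA : IsUnit A) (c : n → K) : ∃! η : n → K, η ᵥ* A = c :=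
  Function.Bijective.existsUnique
    ⟨vecMul_injective_iff_isUnit.2 hA, vecMul_surjective_iff_isUnit.2 hA⟩ c

end Matrix

section Moments

variable {Ω : Type*} [MeasurableSpace Ω] {μ : Measure Ω}

theorem integrable_pow_of_integrable_abs_pow [IsFiniteMeasure μ] {V : Ω → ℝ}
    (hV : AEStronglyMeasurable V μ) {m N : ℕ} (hmN : m ≤ N)
    (hint : Integrable (fun ω => |V ω| ^ N) μ) : Integrable (fun ω => V ω ^ m) μ := by
  have hnorm := integrable_norm_pow_of_le hV hmN (by simpa only [Real.norm_eq_abs] using hint)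
  exact (integrable_norm_iff (hV.pow m)).1 (by simpa only [Pi.pow_apply, norm_pow] using hnorm)

theorem integral_pow_mul_add_pow {X U : Ω → ℝ} (hindep : IndepFun X U μ)
    (hX : AEMeasurable X μ) (hU : AEMeasurable U μ) {j k : ℕ}
    (hXint : ∀ i ≤ j + k, Integrable (fun ω => X ω ^ i) μ)
    (hUint : ∀ i ≤ k, Integrable (fun ω => U ω ^ i) μ) :
    ∫ ω, X ω ^ j * (X ω + U ω) ^ k ∂μ
      = ∑ i ∈ range (k + 1),
          (∫ ω, X ω ^ (j + i) ∂μ) * ((k.choose i : ℝ) * ∫ ω, U ω ^ (k - i) ∂μ) := by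
  have hpow (a b : ℕ) : IndepFun (fun ω => X ω ^ a) (fun ω => U ω ^ b) μ :=
    hindep.comp (measurable_id.pow_const a) (measurable_id.pow_const b)
  have hexpand (ω : Ω) : X ω ^ j * (X ω + U ω) ^ k
      = ∑ i ∈ range (k + 1), (k.choose i : ℝ) * (X ω ^ (j + i) * U ω ^ (k - i)) := by
    rw [add_pow, mul_sum]
    refine sum_congr rfl fun i _ => ?_
    ring
  simp_rw [hexpand]
  rw [integral_finsetSum]
  · refine sum_congr rfl fun i _ => ?_
    rw [integral_const_mul, (hpow _ _).integral_fun_mul_eq_mul_integral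
      (hX.pow_const _).aestronglyMeasurable (hU.pow_const _).aestronglyMeasurable]
    ring
  · intro i hi
    have hik : i ≤ k := Nat.lt_succ_iff.mp (mem_range.mp hi)
    exact ((hpow _ _).integrable_mul (hXint _ (by omega)) (hUint _ (by omega))).const_mul _

theorem mixedMoments_eq_mul_binomialConv {X U : Ω → ℝ} (hindep : IndepFun X U μ)
    (hX : AEMeasurable X μ) (hU : AEMeasurable U μ)
    {p : ℕ} (hXint : ∀ i ≤ 2 * p, Integrable (fun ω => X ω ^ i) μ)
    (hUint : ∀ i ≤ p, Integrable (fun ω => U ω ^ i) μ) :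
    of (fun j k : Fin (p + 1) => ∫ ω, X ω ^ (j : ℕ) * (X ω + U ω) ^ (k : ℕ) ∂μ)
      = of (fun j i : Fin (p + 1) => ∫ ω, X ω ^ ((j : ℕ) + i) ∂μ)
        * binomialConv (p + 1) (fun n => ∫ ω, U ω ^ n ∂μ) := by
  ext j k
  have hj := j.is_le
  have hk := k.is_le
  rw [of_apply, integral_pow_mul_add_pow hindep hX hU (fun i hi => hXint i (by omega))
    (fun i hi => hUint i (by omega)), mul_apply]
  simp only [of_apply, binomialConv]
  rw [Fin.sum_univ_eq_sum_range (fun i => (∫ ω, X ω ^ ((j : ℕ) + i) ∂μ)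
    * (((k : ℕ).choose i : ℝ) * ∫ ω, U ω ^ ((k : ℕ) - i) ∂μ))]
  refine sum_subset (range_subset_range.2 (by omega)) fun i _ hi => ?_
  rw [Nat.choose_eq_zero_of_lt (by simpa using hi)]
  simp

end Moments

/-- Let `X`, `U` be independent with `E|X|^{2p} < ∞`, `E|U|^p < ∞`,
`W = X + U`, and suppose the moment matrix `M = (E(X^{j+k}))` is positive
definite. Then for any reals `c_0, …, c_p` there is a unique polynomial
`γ₁(x) = ∑_j η_j x^j` of degree at most `p` with `E(γ₁(X) W^k) = c_k` for all
`k ≤ p`; in particular, for any bounded measurable `γ` there is a unique such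
polynomial with `E(γ(X) W^k) = E(γ₁(X) W^k)` for all `k ≤ p`. -/
theorem statement17
    {Ω : Type*} [MeasureSpace Ω] [IsProbabilityMeasure (ℙ : Measure Ω)]
    (p : ℕ) (X U : Ω → ℝ) (hX : Measurable X) (hU : Measurable U)
    (hindep : IndepFun X U ℙ)
    (hXmom : Integrable (fun ω => |X ω| ^ (2 * p)) ℙ)
    (hUmom : Integrable (fun ω => |U ω| ^ p) ℙ)
    (W : Ω → ℝ) (hW : ∀ ω, W ω = X ω + U ω)
    (M : Matrix (Fin (p + 1)) (Fin (p + 1)) ℝ)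
    (hM : ∀ j k, M j k = ∫ ω, (X ω) ^ ((j : ℕ) + (k : ℕ)) ∂ℙ)
    (hMpos : M.PosDef) :
    (∀ c : Fin (p + 1) → ℝ, ∃! η : Fin (p + 1) → ℝ,
      ∀ k : Fin (p + 1),
        (∑ j : Fin (p + 1), η j * ∫ ω, (X ω) ^ (j : ℕ) * (W ω) ^ (k : ℕ) ∂ℙ) = c k) ∧
    (∀ γ : ℝ → ℝ, Measurable γ → (∃ C : ℝ, ∀ x, |γ x| ≤ C) →
      ∃! η : Fin (p + 1) → ℝ,
        ∀ k : Fin (p + 1),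
          (∑ j : Fin (p + 1), η j * ∫ ω, (X ω) ^ (j : ℕ) * (W ω) ^ (k : ℕ) ∂ℙ)
            = ∫ ω, γ (X ω) * (W ω) ^ (k : ℕ) ∂ℙ) := by
  have hfactor := mixedMoments_eq_mul_binomialConv hindep hX.aemeasurable hU.aemeasurable
    (fun i hi => integrable_pow_of_integrable_abs_pow hX.aestronglyMeasurable hi hXmom)
    (fun i hi => integrable_pow_of_integrable_abs_pow hU.aestronglyMeasurable hi hUmom)
  have hL : IsUnit (binomialConv (p + 1) (fun n => ∫ ω, U ω ^ n ∂ℙ)) := by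
    rw [isUnit_iff_isUnit_det, det_binomialConv (by simp)]
    exact isUnit_one
  have hA :
      IsUnit (of fun j k : Fin (p + 1) => ∫ ω, X ω ^ (j : ℕ) * W ω ^ (k : ℕ) ∂ℙ) := by
    simp_rw [hW, hfactor, ← hM]
    exact hMpos.isUnit.mul hL
  have hsolve (c : Fin (p + 1) → ℝ) : ∃! η : Fin (p + 1) → ℝ, ∀ k : Fin (p + 1),
      (∑ j : Fin (p + 1), η j * ∫ ω, X ω ^ (j : ℕ) * W ω ^ (k : ℕ) ∂ℙ) = c k := by
    simpa only [funext_iff, vecMul, dotProduct, of_apply] using existsUnique_vecMul_eq hA c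
  exact ⟨hsolve, fun γ _ _ => hsolve _⟩
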